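/- Let $n\ge 2$, $T>0$, $C_1,C_2,C_3>0$. Suppose for each $t\in[0,T)$ that $u(\cdot,t)$ is smooth on $\mathbb{R}$ with $u'>0$, $u''>0$, and that $u'\ge C_2(T-t)$, $u''/u'\le C_3$, $|u'''/u''|\le C_3$, and the scalar curvature expression $R=-\frac{u^{(4)}}{(u'')^2}+\frac{(u''')^2}{(u'')^3}-\frac{2(n-1)u'''}{u'u''}-\frac{(n-1)(n-2)u''}{(u')^2}+\frac{n(n-1)}{u'}$ satisfies $R\ge -C_1$. Then there exists $C>0$ (depending only on $n,C_1,C_2,C_3,T$) such that for all $\rho\in\mathbb{R}$ and $t\in[0,T)$: $-\frac{u^{(4)}}{(u'')^2}+\frac{(u''')^2}{(u'')^3}\ge -\frac{C}{T-t}$. -/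
import Mathlib


open Real Set

/-- Corollary 3.2: a Type I lower bound for `-u⁗/(u'')² + (u''')²/(u'')³` from the
lower scalar curvature bound and the estimates on `u'`, `u''/u'`, `u'''/u''`. -/
theorem type_one_lower_bound (n : ℕ) (hn : 2 ≤ n) (T C₁ C₂ C₃ : ℝ)
    (hT : 0 < T) (hC₁ : 0 < C₁) (hC₂ : 0 < C₂) (hC₃ : 0 < C₃)
    (u : ℝ → ℝ → ℝ)
    (hsmooth : ∀ t ∈ Ico (0 : ℝ) T, ContDiff ℝ (⊤ : ℕ∞) (fun ρ => u ρ t))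
    (hu1 : ∀ ρ : ℝ, ∀ t ∈ Ico (0 : ℝ) T, 0 < deriv (fun x => u x t) ρ)
    (hu2 : ∀ ρ : ℝ, ∀ t ∈ Ico (0 : ℝ) T, 0 < iteratedDeriv 2 (fun x => u x t) ρ)
    (hlow : ∀ ρ : ℝ, ∀ t ∈ Ico (0 : ℝ) T,
      C₂ * (T - t) ≤ deriv (fun x => u x t) ρ)
    (hH : ∀ ρ : ℝ, ∀ t ∈ Ico (0 : ℝ) T,
      iteratedDeriv 2 (fun x => u x t) ρ / deriv (fun x => u x t) ρ ≤ C₃)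
    (hG : ∀ ρ : ℝ, ∀ t ∈ Ico (0 : ℝ) T,
      |iteratedDeriv 3 (fun x => u x t) ρ / iteratedDeriv 2 (fun x => u x t) ρ| ≤ C₃)
    (hR : ∀ ρ : ℝ, ∀ t ∈ Ico (0 : ℝ) T,
      -C₁ ≤
        -(iteratedDeriv 4 (fun x => u x t) ρ / (iteratedDeriv 2 (fun x => u x t) ρ) ^ 2)
        + (iteratedDeriv 3 (fun x => u x t) ρ) ^ 2 / (iteratedDeriv 2 (fun x => u x t) ρ) ^ 3
        - 2 * (n - 1) * iteratedDeriv 3 (fun x => u x t) ρ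
            / (deriv (fun x => u x t) ρ * iteratedDeriv 2 (fun x => u x t) ρ)
        - (n - 1) * (n - 2) * iteratedDeriv 2 (fun x => u x t) ρ
            / (deriv (fun x => u x t) ρ) ^ 2
        + n * (n - 1) / deriv (fun x => u x t) ρ) :
    ∃ C : ℝ, 0 < C ∧ ∀ ρ : ℝ, ∀ t ∈ Ico (0 : ℝ) T,
      -(C / (T - t)) ≤
        -(iteratedDeriv 4 (fun x => u x t) ρ / (iteratedDeriv 2 (fun x => u x t) ρ) ^ 2)
        + (iteratedDeriv 3 (fun x => u x t) ρ) ^ 2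
            / (iteratedDeriv 2 (fun x => u x t) ρ) ^ 3 := by
  have hN : (2:ℝ) ≤ (n:ℝ) := by exact_mod_cast hn
  refine ⟨C₁ * T + (2 * ((n:ℝ) - 1) * C₃ + (n:ℝ) * ((n:ℝ) - 1)) / C₂, ?_, ?_⟩
  · have h1 : 0 < C₁ * T := mul_pos hC₁ hT
    have h2 : 0 < 2 * ((n:ℝ) - 1) * C₃ + (n:ℝ) * ((n:ℝ) - 1) := by nlinarith
    exact add_pos h1 (div_pos h2 hC₂)
  intro ρ t ht
  obtain ⟨ht0, htT⟩ := ht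
  have hs : 0 < T - t := by linarith
  have hs' : T - t ≠ 0 := ne_of_gt hs
  have hC₂' : C₂ ≠ 0 := ne_of_gt hC₂
  set a := deriv (fun x => u x t) ρ with ha_def
  set b := iteratedDeriv 2 (fun x => u x t) ρ with hb_def
  set c := iteratedDeriv 3 (fun x => u x t) ρ with hc_def
  set d := iteratedDeriv 4 (fun x => u x t) ρ with hd_def
  have ha : 0 < a := hu1 ρ t ⟨ht0, htT⟩
  have hb : 0 < b := hu2 ρ t ⟨ht0, htT⟩
  have haC : C₂ * (T - t) ≤ a := hlow ρ t ⟨ht0, htT⟩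
  have hq : 0 < C₂ * (T - t) := mul_pos hC₂ hs
  have hg : |c / b| ≤ C₃ := hG ρ t ⟨ht0, htT⟩
  have hR' := hR ρ t ⟨ht0, htT⟩
  have h1 : -C₃ ≤ c / b := (abs_le.mp hg).1
  have h2 : -(C₃ / a) ≤ c / (a * b) := by
    rw [mul_comm a b, ← div_div, ← neg_div]
    gcongr
  have h3 : C₃ / a ≤ C₃ / (C₂ * (T - t)) := by gcongr
  have h4 : -(C₃ / (C₂ * (T - t))) ≤ c / (a * b) := by linarith
  have hP : -(2 * ((n:ℝ) - 1) * C₃ / (C₂ * (T - t))) ≤ 2 * ((n:ℝ) - 1) * c / (a * b) := by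
    calc -(2 * ((n:ℝ) - 1) * C₃ / (C₂ * (T - t)))
        = (2 * ((n:ℝ) - 1)) * (-(C₃ / (C₂ * (T - t)))) := by ring
      _ ≤ (2 * ((n:ℝ) - 1)) * (c / (a * b)) := by
          apply mul_le_mul_of_nonneg_left h4 (by nlinarith)
      _ = 2 * ((n:ℝ) - 1) * c / (a * b) := by ring
  have hQ : 0 ≤ ((n:ℝ) - 1) * ((n:ℝ) - 2) * b / a ^ 2 := by
    apply div_nonneg _ (by positivity)
    exact mul_nonneg (mul_nonneg (by linarith) (by linarith)) hb.le
  have hS : (n:ℝ) * ((n:ℝ) - 1) / a ≤ (n:ℝ) * ((n:ℝ) - 1) / (C₂ * (T - t)) := by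
    gcongr
    nlinarith
  have step1 : -C₁ - 2 * ((n:ℝ) - 1) * C₃ / (C₂ * (T - t))
      - (n:ℝ) * ((n:ℝ) - 1) / (C₂ * (T - t)) ≤ -(d / b ^ 2) + c ^ 2 / b ^ 3 := by
    linarith [hR', hP, hQ, hS]
  have key : (C₁ * T + (2 * ((n:ℝ) - 1) * C₃ + (n:ℝ) * ((n:ℝ) - 1)) / C₂) / (T - t)
      = C₁ * T / (T - t) + 2 * ((n:ℝ) - 1) * C₃ / (C₂ * (T - t))
        + (n:ℝ) * ((n:ℝ) - 1) / (C₂ * (T - t)) := by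
    field_simp
    ring
  have hCT : C₁ ≤ C₁ * T / (T - t) := by
    rw [le_div_iff₀ hs]
    nlinarith
  rw [key]
  linarith
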